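/- Let H be Hermitian positive definite with λ₁ = … = λ_m < λ_{m+1} and let P be a rank-m orthogonal projection whose largest Ritz value satisfies μ_m < λ_{m+1}. Then the relative gap 𝔤₁ = min over eigenvalues ν of H_P other than the Ritz values of |λ₁ − ν|/ν satisfies 𝔤₁ ≥ (λ_{m+1} − μ_m)/(λ_{m+1} + μ_m), provided η_m < (λ_{m+1} − μ_m)/(λ_{m+1} + μ_m). -/

import Mathlib

open Matrix
open scoped ComplexOrder
open scoped Matrix.Norms.L2Operator

/-- The positive semidefinite square root, as `Matrix.PosSemidef.sqrt` was defined in Mathlib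
(Dec 2024); that definition has since been removed. -/
noncomputable def Matrix.PosSemidef.sqrt {n 𝕜 : Type*} [Fintype n] [DecidableEq n] [RCLike 𝕜]
    {A : Matrix n n 𝕜} (hA : A.PosSemidef) : Matrix n n 𝕜 :=
  hA.1.eigenvectorUnitary.1 * diagonal ((↑) ∘ (√·) ∘ hA.1.eigenvalues) *
    (star hA.1.eigenvectorUnitary : Matrix n n 𝕜)

set_option linter.unusedSectionVars false
set_option linter.unusedVariables false
set_option maxHeartbeats 1600000

set_option maxHeartbeats 1000000

section Helpers

variable {n : Type*} [Fintype n] [DecidableEq n]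

lemma psd_sqrt_conjTranspose {A : Matrix n n ℂ} (hA : A.PosSemidef) :
    (Matrix.PosSemidef.sqrt hA)ᴴ = Matrix.PosSemidef.sqrt hA := by
  simp only [Matrix.PosSemidef.sqrt, conjTranspose_mul, diagonal_conjTranspose,
    star_eq_conjTranspose, conjTranspose_conjTranspose, Matrix.mul_assoc]
  congr 2
  ext i j
  simp [diagonal_apply, Complex.star_def]

lemma psd_sqrt_mul_self {A : Matrix n n ℂ} (hA : A.PosSemidef) :
    Matrix.PosSemidef.sqrt hA * Matrix.PosSemidef.sqrt hA = A := by
  have hU : (star (hA.1.eigenvectorUnitary : Matrix n n ℂ)) *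
      (hA.1.eigenvectorUnitary : Matrix n n ℂ) = 1 :=
    (Matrix.mem_unitaryGroup_iff').mp hA.1.eigenvectorUnitary.2
  rw [show Matrix.PosSemidef.sqrt hA * Matrix.PosSemidef.sqrt hA =
      (hA.1.eigenvectorUnitary : Matrix n n ℂ) *
        (diagonal ((↑) ∘ (√·) ∘ hA.1.eigenvalues) *
          ((star (hA.1.eigenvectorUnitary : Matrix n n ℂ)) *
            (hA.1.eigenvectorUnitary : Matrix n n ℂ)) *
          diagonal ((↑) ∘ (√·) ∘ hA.1.eigenvalues)) *
        (star (hA.1.eigenvectorUnitary : Matrix n n ℂ)) by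
      simp only [Matrix.PosSemidef.sqrt, Matrix.mul_assoc]; rfl]
  rw [hU, Matrix.mul_one, diagonal_mul_diagonal]
  conv_rhs => rw [hA.1.spectral_theorem, Unitary.conjStarAlgAut_apply]
  congr 3
  funext i
  simp only [Function.comp_apply]
  rw [← Complex.ofReal_mul, Real.mul_self_sqrt (hA.eigenvalues_nonneg i)]
  rfl

noncomputable def coeffs {A : Matrix n n ℂ} (hA : A.IsHermitian) (z : n → ℂ) : n → ℂ :=
  (star (hA.eigenvectorUnitary : Matrix n n ℂ)) *ᵥ z

lemma quad_expand {A : Matrix n n ℂ} (hA : A.IsHermitian) (z : n → ℂ) :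
    star z ⬝ᵥ A *ᵥ z = ∑ j, (hA.eigenvalues j : ℂ) *
      ((starRingEnd ℂ) (coeffs hA z j) * coeffs hA z j) := by
  set U := (hA.eigenvectorUnitary : Matrix n n ℂ) with hU
  have h1 : star z ᵥ* U = star (coeffs hA z) := by
    rw [coeffs, star_mulVec, star_eq_conjTranspose, conjTranspose_conjTranspose]
  conv_lhs => rw [hA.spectral_theorem, Unitary.conjStarAlgAut_apply]
  rw [← mulVec_mulVec, ← mulVec_mulVec, dotProduct_mulVec, h1, ← coeffs]
  rw [dotProduct]
  simp only [mulVec_diagonal, Pi.star_apply, Function.comp_apply]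
  congr 1; funext j
  simp only [starRingEnd_apply]
  exact mul_left_comm (star (coeffs hA z j)) ((hA.eigenvalues j : ℂ)) (coeffs hA z j)

lemma norm_expand {A : Matrix n n ℂ} (hA : A.IsHermitian) (z : n → ℂ) :
    star z ⬝ᵥ z = ∑ j, (starRingEnd ℂ) (coeffs hA z j) * coeffs hA z j := by
  have hu : (hA.eigenvectorUnitary : Matrix n n ℂ) *
      (hA.eigenvectorUnitary : Matrix n n ℂ)ᴴ = 1 := by
    rw [← star_eq_conjTranspose]
    exact (Matrix.mem_unitaryGroup_iff).mp (hA.eigenvectorUnitary).2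
  have h2 : star (coeffs hA z) ⬝ᵥ coeffs hA z = star z ⬝ᵥ z := by
    rw [coeffs, star_mulVec, star_eq_conjTranspose, conjTranspose_conjTranspose,
      ← dotProduct_mulVec, mulVec_mulVec, hu, one_mulVec]
  rw [← h2, dotProduct]; rfl

lemma quad_re {A : Matrix n n ℂ} (hA : A.IsHermitian) (z : n → ℂ) :
    (star z ⬝ᵥ A *ᵥ z).re = ∑ j, hA.eigenvalues j * Complex.normSq (coeffs hA z j) := by
  rw [quad_expand hA z, Complex.re_sum]
  congr 1; funext j
  rw [mul_comm ((starRingEnd ℂ) (coeffs hA z j)), Complex.mul_conj, ← Complex.ofReal_mul,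
    Complex.ofReal_re]

lemma sre_expand {A : Matrix n n ℂ} (hA : A.IsHermitian) (z : n → ℂ) :
    (star z ⬝ᵥ z).re = ∑ j, Complex.normSq (coeffs hA z j) := by
  rw [norm_expand hA z, Complex.re_sum]
  congr 1; funext j
  rw [mul_comm ((starRingEnd ℂ) (coeffs hA z j)), Complex.mul_conj, Complex.ofReal_re]

lemma sre_basic (z : n → ℂ) : (star z ⬝ᵥ z).re = ∑ i, Complex.normSq (z i) := by
  rw [dotProduct, Complex.re_sum]
  congr 1; funext i
  rw [Pi.star_apply, ← starRingEnd_apply, mul_comm ((starRingEnd ℂ) (z i)),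
    Complex.mul_conj, Complex.ofReal_re]

lemma sre_nonneg (z : n → ℂ) : 0 ≤ (star z ⬝ᵥ z).re := by
  rw [sre_basic]; exact Finset.sum_nonneg fun i _ => Complex.normSq_nonneg _

lemma sre_pos {z : n → ℂ} (hz : z ≠ 0) : 0 < (star z ⬝ᵥ z).re := by
  rw [sre_basic]
  obtain ⟨i, hi⟩ := Function.ne_iff.mp hz
  exact Finset.sum_pos' (fun i _ => Complex.normSq_nonneg _)
    ⟨i, Finset.mem_univ i, Complex.normSq_pos.mpr hi⟩

lemma quad_le {A : Matrix n n ℂ} (hA : A.IsHermitian) {b : ℝ}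
    (hb : ∀ j, hA.eigenvalues j ≤ b) (z : n → ℂ) :
    (star z ⬝ᵥ A *ᵥ z).re ≤ b * (star z ⬝ᵥ z).re := by
  rw [quad_re hA z, sre_expand hA z, Finset.mul_sum]
  exact Finset.sum_le_sum fun j _ =>
    mul_le_mul_of_nonneg_right (hb j) (Complex.normSq_nonneg _)

lemma quad_ge {A : Matrix n n ℂ} (hA : A.IsHermitian) {a : ℝ} (z : n → ℂ)
    (h : ∀ j, a ≤ hA.eigenvalues j ∨ coeffs hA z j = 0) :
    a * (star z ⬝ᵥ z).re ≤ (star z ⬝ᵥ A *ᵥ z).re := by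
  rw [quad_re hA z, sre_expand hA z, Finset.mul_sum]
  refine Finset.sum_le_sum fun j _ => ?_
  rcases h j with hj | hj
  · exact mul_le_mul_of_nonneg_right hj (Complex.normSq_nonneg _)
  · simp [hj]

end Helpers

section Blocks

variable {p q : Type*} [Fintype p] [Fintype q] [DecidableEq p] [DecidableEq q]

lemma star_sum_elim (z₁ : p → ℂ) (z₂ : q → ℂ) :
    star (Sum.elim z₁ z₂) = Sum.elim (star z₁) (star z₂) := by
  funext i; cases i <;> rfl

lemma block_quad (Ξ : Matrix p p ℂ) (W : Matrix q q ℂ) (K : Matrix q p ℂ)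
    (z₁ : p → ℂ) (z₂ : q → ℂ) :
    (star (Sum.elim z₁ z₂) ⬝ᵥ (fromBlocks Ξ Kᴴ K W) *ᵥ (Sum.elim z₁ z₂)).re =
      (star z₁ ⬝ᵥ Ξ *ᵥ z₁).re + (star z₂ ⬝ᵥ W *ᵥ z₂).re +
        2 * (star z₂ ⬝ᵥ K *ᵥ z₁).re := by
  rw [fromBlocks_mulVec, star_sum_elim, sumElim_dotProduct_sumElim,
    dotProduct_add, dotProduct_add]
  have hconj : star z₁ ⬝ᵥ Kᴴ *ᵥ z₂ = (starRingEnd ℂ) (star z₂ ⬝ᵥ K *ᵥ z₁) := by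
    rw [starRingEnd_apply, star_dotProduct, star_mulVec,
      conjTranspose_conjTranspose, ← dotProduct_mulVec]
  simp only [Sum.elim_comp_inl, Sum.elim_comp_inr, Complex.add_re, hconj, Complex.conj_re]
  ring

lemma block_sre (z₁ : p → ℂ) (z₂ : q → ℂ) :
    (star (Sum.elim z₁ z₂) ⬝ᵥ (Sum.elim z₁ z₂)).re =
      (star z₁ ⬝ᵥ z₁).re + (star z₂ ⬝ᵥ z₂).re := by
  rw [star_sum_elim, sumElim_dotProduct_sumElim, Complex.add_re]

lemma cross_bound (M : Matrix q p ℂ) (u : p → ℂ) (v : q → ℂ) :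
    (star v ⬝ᵥ M *ᵥ u).re ≤
      ‖M‖ * (Real.sqrt ((star u ⬝ᵥ u).re) * Real.sqrt ((star v ⬝ᵥ v).re)) := by
  set u' : EuclideanSpace ℂ p := (WithLp.equiv 2 _).symm u with hu'
  set v' : EuclideanSpace ℂ q := (WithLp.equiv 2 _).symm v with hv'
  have hnu : Real.sqrt ((star u ⬝ᵥ u).re) = ‖u'‖ := by
    rw [show (star u ⬝ᵥ u).re = ‖u'‖ ^ 2 by
      rw [← inner_self_eq_norm_sq (𝕜 := ℂ) u', EuclideanSpace.inner_eq_star_dotProduct, dotProduct_comm]; rfl]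
    exact Real.sqrt_sq (norm_nonneg _)
  have hnv : Real.sqrt ((star v ⬝ᵥ v).re) = ‖v'‖ := by
    rw [show (star v ⬝ᵥ v).re = ‖v'‖ ^ 2 by
      rw [← inner_self_eq_norm_sq (𝕜 := ℂ) v', EuclideanSpace.inner_eq_star_dotProduct, dotProduct_comm]; rfl]
    exact Real.sqrt_sq (norm_nonneg _)
  have h1 : (star v ⬝ᵥ M *ᵥ u).re ≤ ‖star v ⬝ᵥ M *ᵥ u‖ := by
    exact Complex.re_le_norm _
  have h2 : star v ⬝ᵥ M *ᵥ u = inner (𝕜 := ℂ) v' ((WithLp.equiv 2 _).symm (M *ᵥ u)) := by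
    rw [EuclideanSpace.inner_eq_star_dotProduct, dotProduct_comm]; rfl
  have h3 : ‖inner (𝕜 := ℂ) v' ((WithLp.equiv 2 _).symm (M *ᵥ u))‖ ≤
      ‖v'‖ * ‖(WithLp.equiv 2 (q → ℂ)).symm (M *ᵥ u)‖ := norm_inner_le_norm _ _
  have h4 : ‖(WithLp.equiv 2 (q → ℂ)).symm (M *ᵥ u)‖ ≤ ‖M‖ * ‖u'‖ :=
    M.l2_opNorm_mulVec u'
  calc (star v ⬝ᵥ M *ᵥ u).re ≤ ‖star v ⬝ᵥ M *ᵥ u‖ := h1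
    _ ≤ ‖v'‖ * ‖(WithLp.equiv 2 (q → ℂ)).symm (M *ᵥ u)‖ := by rw [h2]; exact h3
    _ ≤ ‖v'‖ * (‖M‖ * ‖u'‖) := mul_le_mul_of_nonneg_left h4 (norm_nonneg _)
    _ = ‖M‖ * (Real.sqrt ((star u ⬝ᵥ u).re) * Real.sqrt ((star v ⬝ᵥ v).re)) := by
        rw [hnu, hnv]; ring

lemma re_ofReal_mul (a : ℝ) (z : ℂ) : ((a : ℂ) * z).re = a * z.re := by
  simp [Complex.mul_re]

end Blocks


lemma aux_lam_le {m k : ℕ}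
    (Ξ : Matrix (Fin m) (Fin m) ℂ) (W : Matrix (Fin k) (Fin k) ℂ)
    (K : Matrix (Fin k) (Fin m) ℂ)
    (hΞH : Ξ.IsHermitian) (hHH : (Matrix.fromBlocks Ξ Kᴴ K W).IsHermitian)
    (lam : ℝ) (hemin : ∀ j, lam ≤ hHH.eigenvalues j) (j0 : Fin m) :
    lam ≤ hΞH.eigenvalues j0 := by
  set y₀ : Fin m → ℂ := ⇑(hΞH.eigenvectorBasis j0) with hy₀
  have hy : Ξ *ᵥ y₀ = hΞH.eigenvalues j0 • y₀ := hΞH.mulVec_eigenvectorBasis j0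
  have hy0 : y₀ ≠ 0 := by
    intro h0
    exact hΞH.eigenvectorBasis.orthonormal.ne_zero j0 (by ext1 j; exact congrFun h0 j)
  set z : (Fin m ⊕ Fin k) → ℂ := Sum.elim y₀ (0 : Fin k → ℂ) with hzdef
  have hz0 : z ≠ 0 := fun h0 => hy0 (funext fun j => congrFun h0 (Sum.inl j))
  have hlow := quad_ge hHH z (fun j => Or.inl (hemin j))
  have hq : (star z ⬝ᵥ (fromBlocks Ξ Kᴴ K W) *ᵥ z).re =
      hΞH.eigenvalues j0 * (star y₀ ⬝ᵥ y₀).re := by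
    rw [hzdef, block_quad, hy]
    simp [dotProduct_smul, Complex.real_smul, re_ofReal_mul]
  have hs : (star z ⬝ᵥ z).re = (star y₀ ⬝ᵥ y₀).re := by
    rw [hzdef, block_sre]; simp
  have hspos : 0 < (star y₀ ⬝ᵥ y₀).re := by
    have := sre_pos hz0; rw [hs] at this; exact this
  rw [hq, hs] at hlow
  exact le_of_mul_le_mul_right hlow hspos


lemma aux_main {m k : ℕ} (hm : 0 < m) (hk : 0 < k)
    (Ξ : Matrix (Fin m) (Fin m) ℂ) (W : Matrix (Fin k) (Fin k) ℂ)
    (K Ks : Matrix (Fin k) (Fin m) ℂ)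
    (hΞ : Ξ.PosDef) (hW : W.PosDef)
    (hH : (Matrix.fromBlocks Ξ Kᴴ K W).PosDef)
    (hK : K = (Matrix.PosSemidef.sqrt hW.posSemidef) * Ks * (Matrix.PosSemidef.sqrt hΞ.posSemidef))
    (L μm : ℝ) (σ : Fin (m + k) ≃ (Fin m ⊕ Fin k))
    (hcount : ∀ j, ((σ.symm j : Fin (m + k)) : ℕ) < m ∨ L ≤ hH.isHermitian.eigenvalues j)
    (hμmax : ∀ j, hΞ.isHermitian.eigenvalues j ≤ μm)
    (hkey : (1 + ‖Ks‖) * μm < L) (hμm0 : 0 < μm)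
    (i : Fin k) :
    L ≤ (1 + ‖Ks‖) * hW.isHermitian.eigenvalues i := by
  have hΞH := hΞ.isHermitian
  have hWH := hW.isHermitian
  have hHH := hH.isHermitian
  have hη0 : (0:ℝ) ≤ ‖Ks‖ := norm_nonneg _
  by_contra hcon
  push_neg at hcon
  set ν := hW.isHermitian.eigenvalues i with hνdef
  have hνpos : (0:ℝ) < ν := hW.eigenvalues_pos i
  set x : Fin k → ℂ := ⇑(hWH.eigenvectorBasis i) with hxdef
  have hx : W *ᵥ x = (ν : ℂ) • x := by
    have h := hWH.mulVec_eigenvectorBasis i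
    rw [← hxdef] at h
    rw [h]; funext j
    simp only [Pi.smul_apply, smul_eq_mul]
    rw [Complex.real_smul]
  have hx0 : x ≠ 0 := by
    intro h0
    exact hWH.eigenvectorBasis.orthonormal.ne_zero i (by ext1 j; exact congrFun h0 j)
  set U : Matrix (Fin m ⊕ Fin k) (Fin m ⊕ Fin k) ℂ :=
    (hHH.eigenvectorUnitary : Matrix (Fin m ⊕ Fin k) (Fin m ⊕ Fin k) ℂ) with hUdef
  set N : Matrix (Fin m ⊕ Fin k) (Fin (m + 1)) ℂ := Matrix.of (fun p q =>
    Sum.casesOn p (fun i' => if q = Fin.castSucc i' then (1:ℂ) else 0)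
      (fun j => if q = Fin.last m then x j else 0)) with hNdef
  set M : Matrix (Fin (m + 1)) (Fin (m + 1)) ℂ := Matrix.of (fun p q =>
    if h : (p : ℕ) < m then (star U * N) (σ ⟨(p : ℕ), by omega⟩) q else 0) with hMdef
  have hdet : M.det = 0 := by
    apply Matrix.det_eq_zero_of_row_eq_zero (Fin.last m)
    intro q
    simp [hMdef]
  obtain ⟨v, hv0, hMv⟩ := (Matrix.exists_mulVec_eq_zero_iff).mpr hdet
  set y : Fin m → ℂ := fun i' => v (Fin.castSucc i') with hydef
  set t : ℂ := v (Fin.last m) with htdef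
  set z : (Fin m ⊕ Fin k) → ℂ := Sum.elim y (t • x) with hzdef
  have hNz : N *ᵥ v = z := by
    funext p
    cases p with
    | inl i' =>
      simp [hNdef, hzdef, hydef, mulVec, dotProduct, ite_mul]
    | inr j =>
      simp [hNdef, hzdef, htdef, mulVec, dotProduct, ite_mul, mul_comm]
  have hz0 : z ≠ 0 := by
    intro h0
    apply hv0
    have hyz : y = 0 := funext fun i' => congrFun h0 (Sum.inl i')
    have htz : t • x = 0 := funext fun j => congrFun h0 (Sum.inr j)
    have ht0 : t = 0 := by
      rcases smul_eq_zero.mp htz with h | h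
      · exact h
      · exact absurd h hx0
    funext q
    rcases Fin.eq_castSucc_or_eq_last q with ⟨q', hq'⟩ | hq'
    · rw [hq']; exact congrFun hyz q'
    · rw [hq']; exact ht0
  have hcoeff : ∀ p : Fin (m + 1), (p : ℕ) < m →
      coeffs hHH z (σ ⟨(p : ℕ), by omega⟩) = 0 := by
    intro p hp
    have h1 : coeffs hHH z = (star U * N) *ᵥ v := by
      rw [coeffs, ← hNz, mulVec_mulVec]
    have h2 : (M *ᵥ v) p = 0 := congrFun hMv p
    rw [h1]
    rw [show ((star U * N) *ᵥ v) (σ ⟨(p : ℕ), by omega⟩) = (M *ᵥ v) p by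
      simp only [hMdef, mulVec, dotProduct, Matrix.of_apply, dif_pos hp]]
    exact h2
  -- lower bound
  have hlow : L * (star z ⬝ᵥ z).re ≤
      (star z ⬝ᵥ (fromBlocks Ξ Kᴴ K W) *ᵥ z).re := by
    apply quad_ge
    intro j
    rcases hcount j with hj | hj
    · right
      have h3 := hcoeff ⟨((σ.symm j : Fin (m + k)) : ℕ), by omega⟩ hj
      rwa [show (⟨((σ.symm j : Fin (m + k)) : ℕ), by omega⟩ : Fin (m + k)) = σ.symm j
          from Fin.ext rfl, Equiv.apply_symm_apply] at h3
    · exact Or.inl hj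
  -- upper bound pieces
  have hsqW : ((Matrix.PosSemidef.sqrt hW.posSemidef))ᴴ = (Matrix.PosSemidef.sqrt hW.posSemidef) := psd_sqrt_conjTranspose hW.posSemidef
  have hsqΞ : ((Matrix.PosSemidef.sqrt hΞ.posSemidef))ᴴ = (Matrix.PosSemidef.sqrt hΞ.posSemidef) := psd_sqrt_conjTranspose hΞ.posSemidef
  set w₁ : Fin m → ℂ := (Matrix.PosSemidef.sqrt hΞ.posSemidef) *ᵥ y with hw₁
  set w₂ : Fin k → ℂ := (Matrix.PosSemidef.sqrt hW.posSemidef) *ᵥ (t • x) with hw₂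
  have e1 : star (t • x) ⬝ᵥ K *ᵥ y = star w₂ ⬝ᵥ Ks *ᵥ w₁ := by
    rw [hK, ← mulVec_mulVec, ← mulVec_mulVec, dotProduct_mulVec,
      show star (t • x) ᵥ* (Matrix.PosSemidef.sqrt hW.posSemidef) = star w₂ by
        rw [hw₂, star_mulVec, hsqW]]
  have e2 : (star w₁ ⬝ᵥ w₁).re = (star y ⬝ᵥ Ξ *ᵥ y).re := by
    rw [show star w₁ ⬝ᵥ w₁ = star y ⬝ᵥ Ξ *ᵥ y by
      rw [hw₁, star_mulVec, hsqΞ, ← dotProduct_mulVec, mulVec_mulVec,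
        psd_sqrt_mul_self hΞ.posSemidef]]
  have e3 : (star w₂ ⬝ᵥ w₂).re = (star (t • x) ⬝ᵥ W *ᵥ (t • x)).re := by
    rw [show star w₂ ⬝ᵥ w₂ = star (t • x) ⬝ᵥ W *ᵥ (t • x) by
      rw [hw₂, star_mulVec, hsqW, ← dotProduct_mulVec, mulVec_mulVec,
        psd_sqrt_mul_self hW.posSemidef]]
  have hcross : 2 * (star (t • x) ⬝ᵥ K *ᵥ y).re ≤
      ‖Ks‖ * ((star y ⬝ᵥ Ξ *ᵥ y).re + (star (t • x) ⬝ᵥ W *ᵥ (t • x)).re) := by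
    have cb := cross_bound Ks w₁ w₂
    rw [e1]
    have ha2 := Real.sq_sqrt (sre_nonneg w₁)
    have hb2 := Real.sq_sqrt (sre_nonneg w₂)
    have han := Real.sqrt_nonneg ((star w₁ ⬝ᵥ w₁).re)
    have hbn := Real.sqrt_nonneg ((star w₂ ⬝ᵥ w₂).re)
    nlinarith [mul_nonneg hη0 (sq_nonneg (Real.sqrt ((star w₁ ⬝ᵥ w₁).re) -
        Real.sqrt ((star w₂ ⬝ᵥ w₂).re)))]
  have hqΞ : (star y ⬝ᵥ Ξ *ᵥ y).re ≤ μm * (star y ⬝ᵥ y).re :=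
    quad_le hΞH hμmax y
  have hqW : (star (t • x) ⬝ᵥ W *ᵥ (t • x)).re = ν * (star (t • x) ⬝ᵥ (t • x)).re := by
    have hx' : W *ᵥ (t • x) = (ν : ℂ) • (t • x) := by
      rw [mulVec_smul, hx, smul_comm]
    rw [hx', dotProduct_smul, smul_eq_mul, re_ofReal_mul]
  have hq : (star z ⬝ᵥ (fromBlocks Ξ Kᴴ K W) *ᵥ z).re =
      (star y ⬝ᵥ Ξ *ᵥ y).re + (star (t • x) ⬝ᵥ W *ᵥ (t • x)).re +
        2 * (star (t • x) ⬝ᵥ K *ᵥ y).re := by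
    rw [hzdef, block_quad]
  have hs : (star z ⬝ᵥ z).re = (star y ⬝ᵥ y).re + (star (t • x) ⬝ᵥ (t • x)).re := by
    rw [hzdef, block_sre]
  have hs₁ : 0 ≤ (star y ⬝ᵥ y).re := sre_nonneg y
  have hs₂ : 0 ≤ (star (t • x) ⬝ᵥ (t • x)).re := sre_nonneg (t • x)
  have hspos : 0 < (star z ⬝ᵥ z).re := sre_pos hz0
  have hΞnn : 0 ≤ (star y ⬝ᵥ Ξ *ᵥ y).re := by
    have h := quad_ge hΞH y (fun j => Or.inl (hΞ.eigenvalues_pos j).le)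
    simpa using h
  have hWnn : 0 ≤ (star (t • x) ⬝ᵥ W *ᵥ (t • x)).re := by
    have h := quad_ge hWH (t • x) (fun j => Or.inl (hW.eigenvalues_pos j).le)
    simpa using h
  -- contradiction
  rw [hq] at hlow
  rw [hs] at hlow hspos
  set s₁ := (star y ⬝ᵥ y).re
  set s₂ := (star (t • x) ⬝ᵥ (t • x)).re
  set A1 := (star y ⬝ᵥ Ξ *ᵥ y).re
  set B1 := (star (t • x) ⬝ᵥ W *ᵥ (t • x)).re
  have hstep1 : L * (s₁ + s₂) ≤ (1 + ‖Ks‖) * (A1 + B1) := by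
    nlinarith [hlow, hcross]
  have hstep2 : (1 + ‖Ks‖) * (A1 + B1) ≤ (1 + ‖Ks‖) * (μm * s₁ + ν * s₂) := by
    apply mul_le_mul_of_nonneg_left _ (by linarith : (0:ℝ) ≤ 1 + ‖Ks‖)
    linarith [hqΞ, hqW.le, hqW.ge]
  have hmain : L * (s₁ + s₂) ≤ (1 + ‖Ks‖) * (μm * s₁ + ν * s₂) := le_trans hstep1 hstep2
  rcases eq_or_lt_of_le hs₁ with h1 | h1
  · have h2 : 0 < s₂ := by linarith
    nlinarith [hmain, hkey, hcon]
  · nlinarith [hmain, hkey, hcon, mul_nonneg (sub_nonneg.mpr hcon.le) hs₂]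

/-- Relative gap bound (Corollary 3.4): in block coordinates, with `H = [[Ξ, Kᴴ],[K, W]]`
positive definite, sorted eigenvalues `e` with `λ₁ = … = λ_m < λ_{m+1}`, Ritz values
`μ₁ ≤ … ≤ μ_m` with `μ_m < λ_{m+1}`, and `η_m = ‖K_s‖` the largest singular value of the
scaled off-diagonal block, if `η_m < (λ_{m+1} − μ_m)/(λ_{m+1} + μ_m)`, then the relative
gap `𝔤₁ = min over eigenvalues ν of W of |λ₁ − ν|/ν` satisfies
`𝔤₁ ≥ (λ_{m+1} − μ_m)/(λ_{m+1} + μ_m)`. -/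
theorem relative_gap_lower_bound
    {m k : ℕ} (hm : 0 < m) (hk : 0 < k)
    (Ξ : Matrix (Fin m) (Fin m) ℂ) (W : Matrix (Fin k) (Fin k) ℂ)
    (K : Matrix (Fin k) (Fin m) ℂ)
    (hΞ : Ξ.PosDef) (hW : W.PosDef)
    (hH : (Matrix.fromBlocks Ξ Kᴴ K W).PosDef)
    (e : Fin (m + k) → ℝ) (σ : Fin (m + k) ≃ (Fin m ⊕ Fin k))
    (he : ∀ i, e i = hH.isHermitian.eigenvalues (σ i)) (hmono : Monotone e)
    (hlam : ∀ i : Fin (m + k), (i : ℕ) < m → e i = e ⟨0, by omega⟩)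
    (hgap : e ⟨m - 1, by omega⟩ < e ⟨m, by omega⟩)
    (μ : Fin m → ℝ) (τ : Equiv.Perm (Fin m))
    (hμ : ∀ i, μ i = hΞ.isHermitian.eigenvalues (τ i)) (hμmono : Monotone μ)
    (hμm : μ ⟨m - 1, by omega⟩ < e ⟨m, by omega⟩)
    (Ks : Matrix (Fin k) (Fin m) ℂ)
    (hKs : Ks = (Matrix.PosSemidef.sqrt hW.posSemidef)⁻¹ * K * (Matrix.PosSemidef.sqrt hΞ.posSemidef)⁻¹)
    (hη : ‖Ks‖ < (e ⟨m, by omega⟩ - μ ⟨m - 1, by omega⟩) /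
      (e ⟨m, by omega⟩ + μ ⟨m - 1, by omega⟩))
    (g1 : ℝ)
    (hg1 : g1 = Finset.univ.inf' (Finset.univ_nonempty_iff.mpr ⟨⟨0, hk⟩⟩)
      (fun i => |e ⟨0, by omega⟩ - hW.isHermitian.eigenvalues i| /
        hW.isHermitian.eigenvalues i)) :
    (e ⟨m, by omega⟩ - μ ⟨m - 1, by omega⟩) /
        (e ⟨m, by omega⟩ + μ ⟨m - 1, by omega⟩) ≤ g1 := by
  have hΞH := hΞ.isHermitian
  have hWH := hW.isHermitian
  have hHH := hH.isHermitian
  have hLpos : (0:ℝ) < e ⟨m, by omega⟩ := by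
    rw [he]; exact hH.eigenvalues_pos _
  have hlampos : (0:ℝ) < e ⟨0, by omega⟩ := by
    rw [he]; exact hH.eigenvalues_pos _
  have hμmpos : (0:ℝ) < μ ⟨m - 1, by omega⟩ := by
    rw [hμ]; exact hΞ.eigenvalues_pos _
  have hη0 : (0:ℝ) ≤ ‖Ks‖ := norm_nonneg _
  have hbb : ‖Ks‖ * (e ⟨m, by omega⟩ + μ ⟨m - 1, by omega⟩) <
      e ⟨m, by omega⟩ - μ ⟨m - 1, by omega⟩ :=
    (lt_div_iff₀ (by linarith)).mp hη
  have hμmax : ∀ j, hΞH.eigenvalues j ≤ μ ⟨m - 1, by omega⟩ := by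
    intro j
    have h1 : τ.symm j ≤ (⟨m - 1, by omega⟩ : Fin m) := by
      rw [Fin.le_def]
      have := (τ.symm j).isLt
      simp; omega
    have h2 := hμmono h1
    rw [hμ (τ.symm j), Equiv.apply_symm_apply] at h2
    exact h2
  have hemin : ∀ j, e ⟨0, by omega⟩ ≤ hHH.eigenvalues j := by
    intro j
    have h1 : (⟨0, by omega⟩ : Fin (m + k)) ≤ σ.symm j := by
      rw [Fin.le_def]; simp
    have h2 := hmono h1
    rw [he (σ.symm j), Equiv.apply_symm_apply] at h2
    exact h2
  have hlmu : e ⟨0, by omega⟩ ≤ μ ⟨m - 1, by omega⟩ := by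
    rw [hμ]
    exact aux_lam_le Ξ W K hΞH hHH _ hemin _
  have key1 : (1 + ‖Ks‖) * μ ⟨m - 1, by omega⟩ < e ⟨m, by omega⟩ := by
    nlinarith [mul_nonneg hη0 hLpos.le]
  have hdetW : ((Matrix.PosSemidef.sqrt hW.posSemidef)).det ≠ 0 := by
    intro h0
    have h2 := congrArg Matrix.det (psd_sqrt_mul_self hW.posSemidef)
    rw [Matrix.det_mul, h0, mul_zero] at h2
    exact hW.det_pos.ne' h2.symm
  have hdetΞ : ((Matrix.PosSemidef.sqrt hΞ.posSemidef)).det ≠ 0 := by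
    intro h0
    have h2 := congrArg Matrix.det (psd_sqrt_mul_self hΞ.posSemidef)
    rw [Matrix.det_mul, h0, mul_zero] at h2
    exact hΞ.det_pos.ne' h2.symm
  have hK : K = (Matrix.PosSemidef.sqrt hW.posSemidef) * Ks * (Matrix.PosSemidef.sqrt hΞ.posSemidef) := by
    rw [hKs]
    simp only [Matrix.mul_assoc]
    rw [Matrix.nonsing_inv_mul _ (isUnit_iff_ne_zero.mpr hdetΞ), Matrix.mul_one,
      ← Matrix.mul_assoc, Matrix.mul_nonsing_inv _ (isUnit_iff_ne_zero.mpr hdetW),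
      Matrix.one_mul]
  have hcount : ∀ j, ((σ.symm j : Fin (m + k)) : ℕ) < m ∨
      e ⟨m, by omega⟩ ≤ hH.isHermitian.eigenvalues j := by
    intro j
    by_cases hj : ((σ.symm j : Fin (m + k)) : ℕ) < m
    · exact Or.inl hj
    · right
      have h1 : (⟨m, by omega⟩ : Fin (m + k)) ≤ σ.symm j := by
        rw [Fin.le_def]; simp; omega
      have h2 := hmono h1
      rw [he (σ.symm j), Equiv.apply_symm_apply] at h2
      exact h2
  have hνL := aux_main hm hk Ξ W K Ks hΞ hW hH hK (e ⟨m, by omega⟩)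
    (μ ⟨m - 1, by omega⟩) σ hcount hμmax key1 hμmpos
  rw [hg1]
  apply Finset.le_inf'
  intro i _
  have hν := hνL i
  have hνpos : (0:ℝ) < hW.isHermitian.eigenvalues i := hW.eigenvalues_pos i
  have hμν : μ ⟨m - 1, by omega⟩ ≤ hW.isHermitian.eigenvalues i := by
    nlinarith
  have habs : |e ⟨0, by omega⟩ - hW.isHermitian.eigenvalues i| =
      hW.isHermitian.eigenvalues i - e ⟨0, by omega⟩ := by
    rw [abs_sub_comm]
    exact abs_of_nonneg (by linarith)
  rw [habs, div_le_div_iff₀ (by linarith) hνpos]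
  nlinarith [mul_le_mul_of_nonneg_left hν hμmpos.le,
    mul_le_mul_of_nonneg_right hlmu
      (by linarith : (0:ℝ) ≤ e ⟨m, by omega⟩ + μ ⟨m - 1, by omega⟩)]
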